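/- For every Gaussian integer v and every nonzero Gaussian integer z, there is exactly one Gaussian integer r ∈ 𝓕(z) with v ≡ r (mod z); that is, the Gaussian integers lying in 𝓕(z) form a complete system of residues modulo z. -/

import Mathlib

/-!
Division by `z` carries `𝓕(z)` onto the half-open unit square centred at `0`. Residues
`r = v - z q` of `v` in `𝓕(z)` thus correspond to Gaussian integers `q` with `v / z - q` in
that square, and these are found coordinatewise: `(-1/2, 1/2]` contains exactly one
translate of each real number by an integer.
-/

open Set GaussianInt

/-- The fundamental domain `𝓕(z)` of a Gaussian integer `z`:
the semi-open square `{ z(α + βi) : -1/2 < α ≤ 1/2, -1/2 < β ≤ 1/2 }` in `ℂ`. -/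
def Fd (z : GaussianInt) : Set ℂ :=
  { w | ∃ α β : ℝ, w = (GaussianInt.toComplex z) * (α + β * Complex.I) ∧
      -(1/2 : ℝ) < α ∧ α ≤ 1/2 ∧ -(1/2 : ℝ) < β ∧ β ≤ 1/2 }

theorem existsUnique_sub_intCast_mem_Ioc_half {K : Type*} [Field K] [LinearOrder K]
    [IsStrictOrderedRing K] [Archimedean K] (x : K) :
    ∃! n : ℤ, x - n ∈ Ioc (-(1/2 : K)) (1/2) := by
  have h := existsUnique_sub_zsmul_mem_Ioc one_pos x (-(1/2 : K))
  rw [show -(1/2 : K) + 1 = 1/2 by ring] at h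
  simpa only [zsmul_one] using h

theorem existsUnique_gaussianInt_sub_mem_Ioc_half (w : ℂ) :
    ∃! q : GaussianInt,
      (w - q).re ∈ Ioc (-(1/2 : ℝ)) (1/2) ∧ (w - q).im ∈ Ioc (-(1/2 : ℝ)) (1/2) := by
  simp only [Complex.sub_re, Complex.sub_im, ← intCast_re, ← intCast_im]
  obtain ⟨m, hm, hm_unique⟩ := existsUnique_sub_intCast_mem_Ioc_half w.re
  obtain ⟨n, hn, hn_unique⟩ := existsUnique_sub_intCast_mem_Ioc_half w.im
  exact ⟨⟨m, n⟩, ⟨hm, hn⟩, fun q ⟨hqm, hqn⟩ ↦ Zsqrtd.ext (hm_unique _ hqm) (hn_unique _ hqn)⟩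

theorem mem_Fd_iff {z : GaussianInt} (hz : z ≠ 0) {w : ℂ} :
    w ∈ Fd z ↔
      (w / z).re ∈ Ioc (-(1/2 : ℝ)) (1/2) ∧ (w / z).im ∈ Ioc (-(1/2 : ℝ)) (1/2) := by
  have hz' : (z : ℂ) ≠ 0 := by simpa using hz
  constructor
  · rintro ⟨α, β, rfl, hα, hα', hβ, hβ'⟩
    rw [mul_div_cancel_left₀ _ hz']
    simpa using (⟨⟨hα, hα'⟩, hβ, hβ'⟩ : α ∈ Ioc _ _ ∧ β ∈ Ioc _ _)
  · rintro ⟨⟨hα, hα'⟩, hβ, hβ'⟩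
    exact ⟨_, _, by rw [Complex.re_add_im, mul_div_cancel₀ _ hz'], hα, hα', hβ, hβ'⟩

/-- For every Gaussian integer `v` and nonzero Gaussian integer `z`, there is exactly
one Gaussian integer `r ∈ 𝓕(z)` with `v ≡ r (mod z)`: the Gaussian integers in `𝓕(z)`
form a complete system of residues modulo `z`. -/
theorem existsUnique_residue_in_Fd (v z : GaussianInt) (hz : z ≠ 0) :
    ∃! r : GaussianInt, GaussianInt.toComplex r ∈ Fd z ∧ z ∣ v - r := by
  have quotient_eq (q : GaussianInt) : ((v - z * q : GaussianInt) : ℂ) / z = v / z - q := by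
    have hz' : (z : ℂ) ≠ 0 := by simpa using hz
    rw [map_sub, map_mul, sub_div, mul_div_cancel_left₀ _ hz']
  obtain ⟨q, hq, hq_unique⟩ := existsUnique_gaussianInt_sub_mem_Ioc_half ((v : ℂ) / z)
  refine ⟨v - z * q, ⟨(mem_Fd_iff hz).2 (by rwa [quotient_eq]), q, by ring⟩, ?_⟩
  rintro r ⟨hr, c, hc⟩
  obtain rfl : r = v - z * c := by rw [← hc, sub_sub_cancel]
  rw [mem_Fd_iff hz, quotient_eq] at hr
  rw [hq_unique c hr]
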